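/- Let k ≥ 2 be an integer, n = k−2, and μ ∈ ℝ. For every invertible g ∈ GL₂(ℝ) and all homogeneous polynomials P, Q of degree n, one has ⟨g∗_μ P, Q⟩ = sign(det g)^k · ⟨P, g^{−1}∗_{−μ} Q⟩. In particular, with the full GL₂(ℝ)-module structure (including orientation-reversing elements) the pairing is not GL₂(ℝ)-invariant when k is odd. -/
import Mathlib


open Complex Finset

/-- Evaluation at `(s, t)` of the homogeneous polynomial of degree `n` in two
variables whose coefficient of `x^a y^(n-a)` is `P a`. -/
noncomputable def evalPoly (n : ℕ) (P : Fin (n+1) → ℂ) (s t : ℂ) : ℂ :=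
  ∑ a : Fin (n+1), P a * s ^ (a : ℕ) * t ^ (n - (a : ℕ))

/-- The bilinear pairing on homogeneous polynomials of degree `n`, given on
monomials by `⟨x^a y^(n-a), x^b y^(n-b)⟩ = 0` if `a + b ≠ n` and
`⟨x^a y^(n-a), x^(n-a) y^a⟩ = (-1)^(n-a) / C(n,a)`. -/
noncomputable def pairing (n : ℕ) (P Q : Fin (n+1) → ℂ) : ℂ :=
  ∑ a : Fin (n+1), P a * Q a.rev * (-1 : ℂ) ^ ((a.rev : ℕ)) / (n.choose (a : ℕ))

/-- Coefficients of the `n`-th power of the linear form `v·x - u·y`. -/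
noncomputable def linC (n : ℕ) (u v : ℂ) : Fin (n+1) → ℂ :=
  fun b => (n.choose (b : ℕ) : ℂ) * v ^ (b : ℕ) * (-u) ^ (n - (b : ℕ))

lemma val_rev' (n : ℕ) (a : Fin (n+1)) : (a.rev : ℕ) = n - (a : ℕ) := by
  simp [Fin.val_rev]

lemma sum_univ_rev' {M : Type*} [AddCommMonoid M] (n : ℕ) (f : Fin n → M) :
    ∑ i : Fin n, f i = ∑ i : Fin n, f i.rev :=
  (Fintype.sum_bijective Fin.rev Fin.rev_bijective _ _ (fun _ => rfl)).symm

lemma choose_ne' (n : ℕ) (a : Fin (n+1)) : ((n.choose (a : ℕ) : ℕ) : ℂ) ≠ 0 := by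
  have : 0 < n.choose (a : ℕ) := Nat.choose_pos (by omega)
  exact_mod_cast this.ne'

/-- A coefficient vector whose one-variable evaluation vanishes everywhere is zero. -/
lemma vec_eq_zero (n : ℕ) (c : Fin (n+1) → ℂ)
    (h : ∀ s : ℂ, ∑ m : Fin (n+1), c m * s ^ (m : ℕ) = 0) : c = 0 := by
  set p : Polynomial ℂ := ∑ m : Fin (n+1), Polynomial.C (c m) * Polynomial.X ^ (m : ℕ) with hp
  have hpe : ∀ s : ℂ, p.eval s = 0 := by
    intro s
    simpa [hp, Polynomial.eval_finset_sum] using h s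
  have hp0 : p = 0 := Polynomial.zero_of_eval_zero p hpe
  funext m
  have : p.coeff (m : ℕ) = c m := by
    rw [hp, Polynomial.finset_sum_coeff]
    rw [Finset.sum_eq_single m]
    · simp
    · intro b _ hb
      have : (b : ℕ) ≠ (m : ℕ) := fun h => hb (Fin.ext h)
      simp [Polynomial.coeff_C_mul, Polynomial.coeff_X_pow, Ne.symm this]
    · simp
  rw [hp0] at this
  simpa using this.symm

/-- `pairing` as a linear functional of the second argument. -/
lemma pairing_eq_sum (n : ℕ) (R Q : Fin (n+1) → ℂ) :
    pairing n R Q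
      = ∑ b : Fin (n+1), Q b * (R b.rev * (-1 : ℂ) ^ (b : ℕ) / (n.choose (b : ℕ))) := by
  rw [pairing, sum_univ_rev' (n+1)]
  refine Finset.sum_congr rfl fun b _ => ?_
  rw [Fin.rev_rev]
  rw [val_rev' n b]
  rw [Nat.choose_symm (by omega : (b:ℕ) ≤ n)]
  ring

/-- Pairing against a power of a linear form recovers evaluation. -/
lemma pairing_linC (n : ℕ) (R : Fin (n+1) → ℂ) (u v : ℂ) :
    pairing n R (linC n u v) = (-1 : ℂ) ^ n * evalPoly n R u v := by
  rw [pairing, evalPoly, Finset.mul_sum]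
  refine Finset.sum_congr rfl fun a _ => ?_
  have ha : (a : ℕ) ≤ n := by omega
  rw [linC, val_rev' n a, Nat.choose_symm ha, Nat.sub_sub_self ha]
  rw [div_eq_iff (choose_ne' n a)]
  have h1 : (-u) ^ (a:ℕ) = (-1:ℂ)^(a:ℕ) * u^(a:ℕ) := by rw [neg_pow]
  have h2 : (-1:ℂ)^(a:ℕ) * (-1:ℂ)^(n - (a:ℕ)) = (-1:ℂ)^n := by
    rw [← pow_add]; congr 1; omega
  calc R a * ((n.choose (a:ℕ) : ℂ) * v ^ (n-(a:ℕ)) * (-u)^(a:ℕ)) * (-1:ℂ)^(n-(a:ℕ))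
      = ((-1:ℂ)^(a:ℕ) * (-1:ℂ)^(n-(a:ℕ))) * (R a * u^(a:ℕ) * v^(n-(a:ℕ))) * (n.choose (a:ℕ) : ℂ) := by
        rw [h1]; ring
    _ = (-1:ℂ)^n * (R a * u^(a:ℕ) * v^(n-(a:ℕ))) * (n.choose (a:ℕ) : ℂ) := by rw [h2]

/-- Injectivity of evaluation at `(s, 1)`. -/
lemma evalInj (n : ℕ) (R S : Fin (n+1) → ℂ)
    (h : ∀ s : ℂ, evalPoly n R s 1 = evalPoly n S s 1) : R = S := by
  have := vec_eq_zero n (R - S) (fun s => by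
    have hs := h s
    simp only [evalPoly, one_pow, mul_one] at hs
    simp only [Pi.sub_apply, sub_mul]
    rw [Finset.sum_sub_distrib, hs, sub_self])
  funext m
  have := congrFun this m
  simpa [sub_eq_zero] using this

/-- If the `linC`-generating functions of two coefficient vectors agree, the vectors agree. -/
lemma funcInj (n : ℕ) (α β : Fin (n+1) → ℂ)
    (h : ∀ u v : ℂ, ∑ b : Fin (n+1), linC n u v b * α b
        = ∑ b : Fin (n+1), linC n u v b * β b) : α = β := by
  have key : ∀ s : ℂ, ∑ m : Fin (n+1),
      ((n.choose ((m:ℕ)) : ℂ) * (α m.rev - β m.rev)) * s ^ (m : ℕ) = 0 := by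
    intro s
    have h1 := h (-s) 1
    simp only [linC, one_pow, mul_one, neg_neg] at h1
    have h2 : ∑ b : Fin (n+1), (n.choose (b:ℕ) : ℂ) * s ^ (n - (b:ℕ)) * (α b - β b) = 0 := by
      calc ∑ b : Fin (n+1), (n.choose (b:ℕ) : ℂ) * s ^ (n - (b:ℕ)) * (α b - β b)
          = (∑ b : Fin (n+1), (n.choose (b:ℕ) : ℂ) * s ^ (n - (b:ℕ)) * α b)
            - ∑ b : Fin (n+1), (n.choose (b:ℕ) : ℂ) * s ^ (n - (b:ℕ)) * β b := by
            rw [← Finset.sum_sub_distrib]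
            exact Finset.sum_congr rfl fun b _ => by ring
        _ = 0 := by rw [sub_eq_zero]; exact h1
    rw [sum_univ_rev' (n+1)] at h2
    rw [← h2]
    refine Finset.sum_congr rfl fun m _ => ?_
    rw [val_rev' n m, Nat.choose_symm (by omega : (m:ℕ) ≤ n),
      Nat.sub_sub_self (by omega : (m:ℕ) ≤ n)]
    ring
  have h0 := vec_eq_zero n _ key
  funext b
  have := congrFun h0 b.rev
  simp only [Fin.rev_rev, Pi.zero_apply, mul_eq_zero] at this
  rcases this with h' | h'
  · exact absurd h' (choose_ne' n b.rev)
  · linear_combination h'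

/-- Homogeneity of `evalPoly`. -/
lemma evalPoly_smul_args (n : ℕ) (P : Fin (n+1) → ℂ) (l s t : ℂ) :
    evalPoly n P (l * s) (l * t) = l ^ n * evalPoly n P s t := by
  rw [evalPoly, evalPoly, Finset.mul_sum]
  refine Finset.sum_congr rfl fun a _ => ?_
  rw [mul_pow, mul_pow]
  have : l ^ (a:ℕ) * l ^ (n - (a:ℕ)) = l ^ n := by rw [← pow_add]; congr 1; omega
  calc P a * (l^(a:ℕ) * s^(a:ℕ)) * (l^(n-(a:ℕ)) * t^(n-(a:ℕ)))
      = (l^(a:ℕ) * l^(n-(a:ℕ))) * (P a * s^(a:ℕ) * t^(n-(a:ℕ))) := by ring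
    _ = l^n * (P a * s^(a:ℕ) * t^(n-(a:ℕ))) := by rw [this]

/-- Evaluation of the linear-form power. -/
lemma evalPoly_linC (n : ℕ) (u v s t : ℂ) :
    evalPoly n (linC n u v) s t = (v * s - u * t) ^ n := by
  have h : v * s - u * t = v * s + (-(u * t)) := by ring
  rw [h, add_pow]
  simp only [evalPoly, linC]
  rw [Fin.sum_univ_eq_sum_range
    (fun a => ((n.choose a : ℂ) * v ^ a * (-u) ^ (n - a)) * s ^ a * t ^ (n - a)) (n+1)]
  exact Finset.sum_congr rfl fun m _ => by ring

lemma eval_fin_sum (n : ℕ) (p : Polynomial ℂ) (hdeg : p.natDegree ≤ n) (s : ℂ) :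
    ∑ m : Fin (n+1), p.coeff (m:ℕ) * s ^ (m:ℕ) = p.eval s := by
  rw [Polynomial.eval_eq_sum_range' (lt_of_le_of_lt hdeg (Nat.lt_succ_self n)) s]
  exact Fin.sum_univ_eq_sum_range (fun m => p.coeff m * s^m) (n+1)

open Polynomial in
lemma natDegree_M_le (a' b' c' d' : ℂ) (n j : ℕ) (hj : j ≤ n) :
    ((C a' * X + C c')^j * (C b' * X + C d')^(n-j)).natDegree ≤ n := by
  have h1 : (C a' * X + C c').natDegree ≤ 1 := by
    refine (natDegree_add_le _ _).trans (max_le ?_ ?_)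
    · exact (natDegree_C_mul_le _ _).trans (by simp)
    · simp
  have h2 : (C b' * X + C d').natDegree ≤ 1 := by
    refine (natDegree_add_le _ _).trans (max_le ?_ ?_)
    · exact (natDegree_C_mul_le _ _).trans (by simp)
    · simp
  refine (natDegree_mul_le).trans ?_
  have g1 : ((C a' * X + C c')^j).natDegree ≤ j :=
    natDegree_pow_le.trans (by nlinarith)
  have g2 : ((C b' * X + C d')^(n-j)).natDegree ≤ n - j :=
    natDegree_pow_le.trans (by nlinarith)
  omega

lemma scalar_id (k n : ℕ) (hk : 2 ≤ k) (hn : n = k - 2) (μ Δ : ℝ) (hΔ : Δ ≠ 0) :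
    |Δ| ^ ((2 - (k:ℝ) + μ)/2) * Δ^n = (Real.sign Δ)^k * (|Δ⁻¹| ^ ((2 - (k:ℝ) - μ)/2)) := by
  have habs : 0 < |Δ| := abs_pos.mpr hΔ
  have hsign : Δ = Real.sign Δ * |Δ| := by
    rcases hΔ.lt_or_gt with h | h
    · rw [Real.sign_of_neg h, abs_of_neg h]; ring
    · rw [Real.sign_of_pos h, abs_of_pos h]; ring
  have hsgn2 : Real.sign Δ * Real.sign Δ = 1 := by
    rcases hΔ.lt_or_gt with h | h
    · rw [Real.sign_of_neg h]; ring
    · rw [Real.sign_of_pos h]; ring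
  have hk' : k = n + 2 := by omega
  have hsignk : (Real.sign Δ)^k = (Real.sign Δ)^n := by
    rw [hk', pow_add, pow_two, hsgn2, mul_one]
  have hΔn : Δ^n = (Real.sign Δ)^n * |Δ|^n := by rw [← mul_pow, ← hsign]
  have hncast : (n:ℝ) = (k:ℝ) - 2 := by
    rw [hn]; rw [Nat.cast_sub hk]; norm_num
  rw [hΔn, hsignk, abs_inv, Real.inv_rpow (abs_nonneg Δ), ← Real.rpow_neg (abs_nonneg Δ)]
  rw [← Real.rpow_natCast |Δ| n]
  calc |Δ| ^ ((2 - (k:ℝ) + μ)/2) * ((Real.sign Δ)^n * |Δ| ^ (n:ℝ))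
      = (Real.sign Δ)^n * (|Δ| ^ ((2 - (k:ℝ) + μ)/2) * |Δ| ^ (n:ℝ)) := by ring
    _ = (Real.sign Δ)^n * |Δ| ^ ((2 - (k:ℝ) + μ)/2 + n) := by rw [Real.rpow_add habs]
    _ = (Real.sign Δ)^n * |Δ| ^ (-((2 - (k:ℝ) - μ)/2)) := by rw [hncast]; ring_nf

lemma pairing_smul_right (n : ℕ) (P R : Fin (n+1) → ℂ) (c : ℂ) :
    pairing n P (fun m => c * R m) = c * pairing n P R := by
  rw [pairing, pairing, Finset.mul_sum]
  exact Finset.sum_congr rfl fun a _ => by ring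

/-- For `k ≥ 2`, `n = k - 2`, `μ ∈ ℝ` and any invertible `g ∈ GL₂(ℝ)`:
if `P'` is `g ∗_μ P`, i.e. `P'(x,y) = |det g|^((2-k+μ)/2) P(ax+cy, bx+dy)`, and
`Q'` is `g⁻¹ ∗_{-μ} Q`, then `⟨g ∗_μ P, Q⟩ = sign(det g)^k ⟨P, g⁻¹ ∗_{-μ} Q⟩`.
In particular, for `k` odd the pairing is not invariant under the full `GL₂(ℝ)`-action. -/
theorem pairing_GLtwo_sign (k : ℕ) (hk : 2 ≤ k) (n : ℕ) (hn : n = k - 2)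
    (μ : ℝ) (g : Matrix (Fin 2) (Fin 2) ℝ) (hg : g.det ≠ 0)
    (P Q P' Q' : Fin (n+1) → ℂ)
    (hP' : ∀ x y : ℂ, evalPoly n P' x y =
      ((|g.det| ^ ((2 - (k : ℝ) + μ) / 2) : ℝ) : ℂ) *
        evalPoly n P ((g 0 0 : ℝ) * x + (g 1 0 : ℝ) * y) ((g 0 1 : ℝ) * x + (g 1 1 : ℝ) * y))
    (hQ' : ∀ x y : ℂ, evalPoly n Q' x y =
      ((|(g⁻¹).det| ^ ((2 - (k : ℝ) - μ) / 2) : ℝ) : ℂ) *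
        evalPoly n Q ((g⁻¹ 0 0 : ℝ) * x + (g⁻¹ 1 0 : ℝ) * y)
          ((g⁻¹ 0 1 : ℝ) * x + (g⁻¹ 1 1 : ℝ) * y)) :
    pairing n P' Q = ((Real.sign g.det : ℝ) : ℂ) ^ k * pairing n P Q' := by
  have hdetinv : (g⁻¹).det = (g.det)⁻¹ := by
    rw [Matrix.det_nonsing_inv, Ring.inverse_eq_inv']
  -- real inverse-entry identities
  have hinv00 : g⁻¹ 0 0 = (g.det)⁻¹ * g 1 1 := by
    rw [Matrix.inv_def, Matrix.adjugate_fin_two]; simp [Ring.inverse_eq_inv']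
  have hinv01 : g⁻¹ 0 1 = (g.det)⁻¹ * -(g 0 1) := by
    rw [Matrix.inv_def, Matrix.adjugate_fin_two]; simp [Ring.inverse_eq_inv']
  have hinv10 : g⁻¹ 1 0 = (g.det)⁻¹ * -(g 1 0) := by
    rw [Matrix.inv_def, Matrix.adjugate_fin_two]; simp [Ring.inverse_eq_inv']
  have hinv11 : g⁻¹ 1 1 = (g.det)⁻¹ * g 0 0 := by
    rw [Matrix.inv_def, Matrix.adjugate_fin_two]; simp [Ring.inverse_eq_inv']
  -- complex abbreviations
  set a' : ℂ := ((g⁻¹ 0 0 : ℝ) : ℂ) with ha'def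
  set b' : ℂ := ((g⁻¹ 0 1 : ℝ) : ℂ) with hb'def
  set c' : ℂ := ((g⁻¹ 1 0 : ℝ) : ℂ) with hc'def
  set d' : ℂ := ((g⁻¹ 1 1 : ℝ) : ℂ) with hd'def
  set ΔC : ℂ := ((g.det : ℝ) : ℂ) with hΔCdef
  set c1 : ℂ := ((|g.det| ^ ((2 - (k : ℝ) + μ) / 2) : ℝ) : ℂ) with hc1def
  set c2 : ℂ := ((|(g⁻¹).det| ^ ((2 - (k : ℝ) - μ) / 2) : ℝ) : ℂ) with hc2def
  set sgn : ℂ := ((Real.sign g.det : ℝ) : ℂ) with hsgndef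
  have hda : ΔC * a' = ((g 1 1 : ℝ) : ℂ) := by
    rw [ha'def, hΔCdef, ← Complex.ofReal_mul, hinv00]
    congr 1; field_simp
  have hdb : ΔC * b' = -((g 0 1 : ℝ) : ℂ) := by
    rw [hb'def, hΔCdef, ← Complex.ofReal_mul, hinv01, ← Complex.ofReal_neg]
    congr 1; field_simp
  have hdc : ΔC * c' = -((g 1 0 : ℝ) : ℂ) := by
    rw [hc'def, hΔCdef, ← Complex.ofReal_mul, hinv10, ← Complex.ofReal_neg]
    congr 1; field_simp
  have hdd : ΔC * d' = ((g 0 0 : ℝ) : ℂ) := by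
    rw [hd'def, hΔCdef, ← Complex.ofReal_mul, hinv11]
    congr 1; field_simp
  -- scalar identity
  have hscal : c1 * ΔC ^ n = sgn ^ k * c2 := by
    rw [hc1def, hc2def, hΔCdef, hsgndef, hdetinv]
    have h := congrArg (fun x : ℝ => (x : ℂ)) (scalar_id k n hk hn μ g.det hg)
    push_cast at h
    exact_mod_cast h
  -- the polynomial encoding of the action of g⁻¹
  set M : Fin (n+1) → Polynomial ℂ := fun b =>
    (Polynomial.C a' * Polynomial.X + Polynomial.C c')^(b:ℕ) *
    (Polynomial.C b' * Polynomial.X + Polynomial.C d')^(n-(b:ℕ)) with hM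
  set T : (Fin (n+1) → ℂ) → (Fin (n+1) → ℂ) :=
    fun R m => ∑ b : Fin (n+1), R b * (M b).coeff (m:ℕ) with hT
  have hE : ∀ (R : Fin (n+1) → ℂ) (s : ℂ),
      evalPoly n (T R) s 1 = evalPoly n R (a' * s + c') (b' * s + d') := by
    intro R s
    rw [evalPoly, evalPoly]
    simp only [one_pow, mul_one]
    have hswap : ∀ m : Fin (n+1), T R m * s^(m:ℕ)
        = ∑ b : Fin (n+1), R b * ((M b).coeff (m:ℕ) * s^(m:ℕ)) := by
      intro m
      rw [hT]
      dsimp only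
      rw [Finset.sum_mul]
      exact Finset.sum_congr rfl fun b _ => by ring
    rw [Finset.sum_congr rfl fun m _ => hswap m, Finset.sum_comm]
    refine Finset.sum_congr rfl fun b _ => ?_
    rw [← Finset.mul_sum,
      eval_fin_sum n (M b) (natDegree_M_le a' b' c' d' n (b:ℕ) (by omega)) s]
    rw [hM]
    simp only [Polynomial.eval_mul, Polynomial.eval_pow, Polynomial.eval_add,
      Polynomial.eval_C, Polynomial.eval_X, mul_assoc]
  have hTQ : (fun m => c2 * T Q m) = Q' := by
    apply evalInj
    intro s
    have h1 : evalPoly n (fun m => c2 * T Q m) s 1 = c2 * evalPoly n (T Q) s 1 := by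
      rw [evalPoly, evalPoly, Finset.mul_sum]
      exact Finset.sum_congr rfl fun m _ => by ring
    rw [h1, hE Q s, hQ' s 1]
    simp [mul_one]
  have hTLin : ∀ u v : ℂ, T (linC n u v) = linC n (u*d' - v*c') (v*a' - u*b') := by
    intro u v
    apply evalInj
    intro s
    rw [hE (linC n u v) s, evalPoly_linC, evalPoly_linC]
    congr 1; ring
  set α : Fin (n+1) → ℂ :=
    fun b => P' b.rev * (-1:ℂ)^(b:ℕ) / (n.choose (b:ℕ)) with hα
  set β : Fin (n+1) → ℂ :=
    fun b => sgn^k * c2 * pairing n P (fun m => (M b).coeff (m:ℕ)) with hβ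
  have hlin : ∀ Q₀ : Fin (n+1) → ℂ,
      sgn^k * c2 * pairing n P (T Q₀) = ∑ b : Fin (n+1), Q₀ b * β b := by
    intro Q₀
    have step : ∀ a : Fin (n+1),
        P a * (T Q₀ a.rev) * (-1:ℂ)^((a.rev:ℕ)) / (n.choose (a:ℕ))
          = ∑ b : Fin (n+1),
            Q₀ b * (P a * (M b).coeff ((a.rev:ℕ)) * (-1:ℂ)^((a.rev:ℕ)) / (n.choose (a:ℕ))) := by
      intro a
      rw [hT]
      dsimp only
      rw [Finset.mul_sum, Finset.sum_mul, Finset.sum_div]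
      exact Finset.sum_congr rfl fun b _ => by ring
    calc sgn^k * c2 * pairing n P (T Q₀)
        = ∑ a : Fin (n+1), ∑ b : Fin (n+1), sgn^k * c2 *
            (Q₀ b * (P a * (M b).coeff ((a.rev:ℕ)) * (-1:ℂ)^((a.rev:ℕ)) / (n.choose (a:ℕ)))) := by
          rw [pairing, Finset.mul_sum]
          exact Finset.sum_congr rfl fun a _ => by rw [step a, Finset.mul_sum]
      _ = ∑ b : Fin (n+1), Q₀ b * β b := by
          rw [Finset.sum_comm]
          refine Finset.sum_congr rfl fun b _ => ?_
          rw [hβ]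
          dsimp only
          rw [pairing, Finset.mul_sum, Finset.mul_sum]
          exact Finset.sum_congr rfl fun a _ => by ring
  have hαβ : α = β := by
    apply funcInj
    intro u v
    have hL : ∑ b : Fin (n+1), linC n u v b * α b = pairing n P' (linC n u v) := by
      rw [pairing_eq_sum n P' (linC n u v)]
    have hR : ∑ b : Fin (n+1), linC n u v b * β b
        = sgn^k * c2 * ((-1:ℂ)^n * evalPoly n P (u*d' - v*c') (v*a' - u*b')) := by
      rw [← hlin (linC n u v), hTLin u v, pairing_linC]
    rw [hL, hR, pairing_linC, hP' u v]
    have hArgs1 : ((g 0 0 : ℝ) : ℂ) * u + ((g 1 0 : ℝ) : ℂ) * v = ΔC * (u*d' - v*c') := by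
      rw [mul_sub, show ΔC * (u*d') = u * (ΔC*d') from by ring,
        show ΔC * (v*c') = v * (ΔC*c') from by ring, hdd, hdc]
      ring
    have hArgs2 : ((g 0 1 : ℝ) : ℂ) * u + ((g 1 1 : ℝ) : ℂ) * v = ΔC * (v*a' - u*b') := by
      rw [mul_sub, show ΔC * (v*a') = v * (ΔC*a') from by ring,
        show ΔC * (u*b') = u * (ΔC*b') from by ring, hda, hdb]
      ring
    rw [hArgs1, hArgs2, evalPoly_smul_args]
    linear_combination ((-1:ℂ)^n * evalPoly n P (u*d' - v*c') (v*a' - u*b')) * hscal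
  calc pairing n P' Q = ∑ b : Fin (n+1), Q b * α b := by
        rw [pairing_eq_sum n P' Q]
    _ = ∑ b : Fin (n+1), Q b * β b := by rw [hαβ]
    _ = sgn^k * c2 * pairing n P (T Q) := (hlin Q).symm
    _ = sgn^k * pairing n P (fun m => c2 * T Q m) := by
        rw [pairing_smul_right]; ring
    _ = sgn^k * pairing n P Q' := by rw [hTQ]
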